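/- arXiv:cs/0201010 — 5 statements merged into one kernel-verified Lean document; each statement's English description precedes it below -/
import Mathlib

section
/- If A is a finite set with |A| ≤ 3, then every quasi field of subsets of A is a field. -/
/-- If |A| ≤ 3 then every quasi field of subsets of A is a field
(i.e. closed under all binary unions). -/
theorem quasi_field_is_field_of_card_le_three
    {α : Type*} [Fintype α] [DecidableEq α]
    (h3 : Fintype.card α ≤ 3)
    (S : Set (Finset α))
    (hempty : ∅ ∈ S)
    (hcompl : ∀ B ∈ S, Bᶜ ∈ S)
    (hdisjunion : ∀ B ∈ S, ∀ C ∈ S, Disjoint B C → B ∪ C ∈ S) :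
    ∀ B ∈ S, ∀ C ∈ S, B ∪ C ∈ S := by
  intro B hB C hC
  by_cases hd : Disjoint B C
  · exact hdisjunion B hB C hC hd
  by_cases hBC : B ⊆ C
  · rwa [Finset.union_eq_right.mpr hBC]
  by_cases hCB : C ⊆ B
  · rwa [Finset.union_eq_left.mpr hCB]
  -- B \ C, C \ B, B ∩ C are disjoint and nonempty
  have h1 : (B \ C).Nonempty := by
    rw [Finset.sdiff_nonempty]; exact hBC
  have h2 : (C \ B).Nonempty := by
    rw [Finset.sdiff_nonempty]; exact hCB
  have h3' : (B ∩ C).Nonempty := Finset.not_disjoint_iff_nonempty_inter.mp hd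
  have hcard : 3 ≤ (B ∪ C).card := by
    have hsub : (B \ C) ∪ (C \ B) ∪ (B ∩ C) ⊆ B ∪ C := by
      intro x hx
      simp only [Finset.mem_union, Finset.mem_sdiff, Finset.mem_inter] at hx ⊢
      tauto
    have hd12 : Disjoint (B \ C) (C \ B) := by
      apply Finset.disjoint_left.mpr
      intro x hx hx'
      simp only [Finset.mem_sdiff] at hx hx'
      exact hx.2 hx'.1
    have hd3 : Disjoint ((B \ C) ∪ (C \ B)) (B ∩ C) := by
      apply Finset.disjoint_left.mpr
      intro x hx hx'
      simp only [Finset.mem_union, Finset.mem_sdiff, Finset.mem_inter] at hx hx'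
      tauto
    have := Finset.card_le_card hsub
    rw [Finset.card_union_of_disjoint hd3, Finset.card_union_of_disjoint hd12] at this
    have c1 := h1.card_pos
    have c2 := h2.card_pos
    have c3 := h3'.card_pos
    omega
  have huniv : B ∪ C = Finset.univ := by
    apply Finset.eq_univ_of_card
    have hle : (B ∪ C).card ≤ Fintype.card α := Finset.card_le_univ _
    omega
  rw [huniv, ← Finset.compl_empty]
  exact hcompl ∅ hempty
end

section
/- Let Δ = (H_1,...,H_s) be a family of pairwise intersecting subsets of {1,...,k}, and δ = (δ_1,...,δ_s) a semi-balanced vector for Δ. Then Σ_{i=1}^s δ_i ≤ φ(k), where φ(k) = max_{j=1,...,k} min{j, k/j}. -/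
/-- Proposition 2: for pairwise intersecting subsets H_1,…,H_s of {1,…,k} and a
semi-balanced vector δ, Σ δ_i ≤ φ(k) = max_{j=1,…,k} min{j, k/j}. -/
theorem semibalanced_sum_le_phi
    {k s : ℕ} (hk : 1 ≤ k)
    (H : Fin s → Finset (Fin k))
    (hint : ∀ i j, (H i ∩ H j).Nonempty)
    (δ : Fin s → ℝ) (hδ : ∀ i, 0 ≤ δ i)
    (hsb : ∀ l : Fin k, ∑ i ∈ Finset.univ.filter (fun i => l ∈ H i), δ i ≤ 1) :
    ∑ i, δ i ≤
      (Finset.Icc 1 k).sup' (Finset.nonempty_Icc.2 hk)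
        (fun j => min (j : ℝ) ((k : ℝ) / (j : ℝ))) := by
  classical
  rcases Nat.eq_zero_or_pos s with hs | hs
  · subst hs
    refine le_trans ?_ (Finset.le_sup' _ (Finset.mem_Icc.2 ⟨le_refl 1, hk⟩))
    simp only [Finset.univ_eq_empty, Finset.sum_empty, Nat.cast_one, div_one, le_min_iff]
    constructor <;> [norm_num; positivity]
  · obtain ⟨m, -, hm⟩ := Finset.exists_min_image Finset.univ (fun i => (H i).card)
      ⟨⟨0, hs⟩, Finset.mem_univ _⟩
    set t := (H m).card with htdef
    have ht1 : 1 ≤ t := Finset.card_pos.2 (by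
      have := hint m m; simpa using this)
    have htk : t ≤ k := le_trans (Finset.card_le_univ _) (by simp)
    -- key double counting identity
    have key : ∀ A : Finset (Fin k),
        ∑ l ∈ A, ∑ i ∈ Finset.univ.filter (fun i => l ∈ H i), δ i
          = ∑ i, ((A ∩ H i).card : ℝ) * δ i := by
      intro A
      calc ∑ l ∈ A, ∑ i ∈ Finset.univ.filter (fun i => l ∈ H i), δ i
          = ∑ l ∈ A, ∑ i, if l ∈ H i then δ i else 0 := by
            simp [Finset.sum_filter]
        _ = ∑ i, ∑ l ∈ A, if l ∈ H i then δ i else 0 := Finset.sum_comm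
        _ = ∑ i, ((A ∩ H i).card : ℝ) * δ i := by
            refine Finset.sum_congr rfl fun i _ => ?_
            rw [← Finset.sum_filter, Finset.sum_const, Finset.filter_mem_eq_inter,
              nsmul_eq_mul]
    -- bound 1 : ∑ δ ≤ t
    have h1 : ∑ i, δ i ≤ (t : ℝ) := by
      have step1 : ∑ i, δ i ≤ ∑ i, ((H m ∩ H i).card : ℝ) * δ i := by
        refine Finset.sum_le_sum fun i _ => ?_
        have hc : 1 ≤ ((H m ∩ H i).card : ℝ) := by
          exact_mod_cast Finset.card_pos.2 (hint m i)
        nlinarith [hδ i]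
      have step2 : ∑ l ∈ H m, ∑ i ∈ Finset.univ.filter (fun i => l ∈ H i), δ i
          ≤ (t : ℝ) := by
        calc ∑ l ∈ H m, ∑ i ∈ Finset.univ.filter (fun i => l ∈ H i), δ i
            ≤ ∑ _l ∈ H m, (1 : ℝ) := Finset.sum_le_sum fun l _ => hsb l
          _ = (t : ℝ) := by simp [htdef]
      calc ∑ i, δ i ≤ ∑ i, ((H m ∩ H i).card : ℝ) * δ i := step1
        _ = ∑ l ∈ H m, ∑ i ∈ Finset.univ.filter (fun i => l ∈ H i), δ i := (key _).symm
        _ ≤ (t : ℝ) := step2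
    -- bound 2 : t * ∑ δ ≤ k
    have h2 : (t : ℝ) * ∑ i, δ i ≤ (k : ℝ) := by
      have step1 : (t : ℝ) * ∑ i, δ i ≤ ∑ i, (((Finset.univ : Finset (Fin k)) ∩ H i).card : ℝ) * δ i := by
        rw [Finset.mul_sum]
        refine Finset.sum_le_sum fun i _ => ?_
        have hc : (t : ℝ) ≤ ((Finset.univ ∩ H i).card : ℝ) := by
          rw [Finset.univ_inter]
          exact_mod_cast hm i (Finset.mem_univ i)
        exact mul_le_mul_of_nonneg_right hc (hδ i)
      have step2 : ∑ l : Fin k, ∑ i ∈ Finset.univ.filter (fun i => l ∈ H i), δ i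
          ≤ (k : ℝ) := by
        calc ∑ l : Fin k, ∑ i ∈ Finset.univ.filter (fun i => l ∈ H i), δ i
            ≤ ∑ _l : Fin k, (1 : ℝ) := Finset.sum_le_sum fun l _ => hsb l
          _ = (k : ℝ) := by simp
      calc (t : ℝ) * ∑ i, δ i
          ≤ ∑ i, (((Finset.univ : Finset (Fin k)) ∩ H i).card : ℝ) * δ i := step1
        _ = ∑ l : Fin k, ∑ i ∈ Finset.univ.filter (fun i => l ∈ H i), δ i := (key _).symm
        _ ≤ (k : ℝ) := step2
    have htpos : (0 : ℝ) < (t : ℝ) := by exact_mod_cast ht1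
    have h2' : ∑ i, δ i ≤ (k : ℝ) / (t : ℝ) := (le_div_iff₀ htpos).2 (by linarith [h2])
    refine le_trans ?_ (Finset.le_sup' _ (Finset.mem_Icc.2 ⟨ht1, htk⟩))
    exact le_min h1 h2'
end

section
/- Let π = {A_1,...,A_k} be a partition of a finite set A into nonempty parts with β = max_l |A_l|. Let Δ = (H_1,...,H_s) be a family of subsets of {1,...,k} such that any two members intersect and for every l, the number of sets H_i containing l is at most |A_l|. Then s ≤ β · φ(k), where φ(k) = max_{j=1,...,k} min{j, k/j}. -/
/-- Theorem 3: if π = (A_1,…,A_k) is a partition of A into nonempty parts of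
maximum size β, then every feasible family for π has size
s ≤ β · φ(k), where φ(k) = max_{j=1,…,k} min{j, k/j}. -/
theorem feasible_family_size_le_beta_phi
    {α : Type*} [Fintype α] [DecidableEq α]
    {k : ℕ} (hk : 1 ≤ k)
    (A : Fin k → Finset α)
    (hne : ∀ l, (A l).Nonempty)
    (hdisj : ∀ l l', l ≠ l' → Disjoint (A l) (A l'))
    (hcover : Finset.univ.biUnion A = Finset.univ)
    (β : ℕ) (hβ : β = Finset.univ.sup (fun l => (A l).card))
    {s : ℕ} (H : Fin s → Finset (Fin k))
    (hint : ∀ i j, (H i ∩ H j).Nonempty)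
    (hfeas : ∀ l, (Finset.univ.filter (fun i => l ∈ H i)).card ≤ (A l).card) :
    (s : ℝ) ≤ (β : ℝ) *
      (Finset.Icc 1 k).sup' (Finset.nonempty_Icc.2 hk)
        (fun j => min (j : ℝ) ((k : ℝ) / (j : ℝ))) := by
  set φ : ℝ := (Finset.Icc 1 k).sup' (Finset.nonempty_Icc.2 hk)
        (fun j => min (j : ℝ) ((k : ℝ) / (j : ℝ))) with hφ
  have hβl : ∀ l, (A l).card ≤ β := fun l => hβ ▸ Finset.le_sup (f := fun l => (A l).card) (Finset.mem_univ l)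
  have hφ1 : (1 : ℝ) ≤ φ := by
    have h1 : (1 : ℕ) ∈ Finset.Icc 1 k := by simp [hk]
    have hle := Finset.le_sup' (fun j : ℕ => min (j : ℝ) ((k : ℝ) / (j : ℝ))) h1
    have hk' : (1 : ℝ) ≤ (k : ℝ) := by exact_mod_cast hk
    simp only [Nat.cast_one, div_one] at hle
    calc (1 : ℝ) = min 1 (k : ℝ) := (min_eq_left hk').symm
      _ ≤ φ := hle
  rcases Nat.eq_zero_or_pos s with hs | hs
  · subst hs
    simp only [Nat.cast_zero]
    have hβ0 : (0 : ℝ) ≤ (β : ℝ) := by positivity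
    nlinarith
  -- minimal set
  obtain ⟨i0, -, hi0⟩ := Finset.exists_min_image Finset.univ (fun i => (H i).card)
    ⟨⟨0, hs⟩, Finset.mem_univ _⟩
  set j : ℕ := (H i0).card with hjdef
  have hH0ne : (H i0).Nonempty := by
    have := hint i0 i0
    rwa [Finset.inter_self] at this
  have hj1 : 1 ≤ j := Finset.card_pos.2 hH0ne
  have hjk : j ≤ k := by
    calc j ≤ Fintype.card (Fin k) := Finset.card_le_univ _
      _ = k := Fintype.card_fin k
  have claim1 : s ≤ j * β := by
    have hsub : (Finset.univ : Finset (Fin s)) ⊆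
        (H i0).biUnion (fun l => Finset.univ.filter (fun i => l ∈ H i)) := by
      intro i _
      obtain ⟨l, hl⟩ := hint i i0
      simp only [Finset.mem_inter] at hl
      exact Finset.mem_biUnion.2 ⟨l, hl.2, by simp [hl.1]⟩
    calc s = (Finset.univ : Finset (Fin s)).card := by simp
      _ ≤ ((H i0).biUnion (fun l => Finset.univ.filter (fun i => l ∈ H i))).card :=
          Finset.card_le_card hsub
      _ ≤ ∑ l ∈ H i0, (Finset.univ.filter (fun i => l ∈ H i)).card :=
          Finset.card_biUnion_le
      _ ≤ ∑ _l ∈ H i0, β := Finset.sum_le_sum (fun l _ => (hfeas l).trans (hβl l))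
      _ = j * β := by simp [hjdef, mul_comm]
  have claim2 : s * j ≤ k * β := by
    have hdouble : ∑ i : Fin s, (H i).card =
        ∑ l : Fin k, (Finset.univ.filter (fun i => l ∈ H i)).card := by
      simp_rw [Finset.card_filter]
      rw [Finset.sum_comm]
      refine Finset.sum_congr rfl (fun i _ => ?_)
      rw [← Finset.card_filter]
      simp [Finset.filter_mem_eq_inter]
    calc s * j = ∑ _i : Fin s, j := by simp [mul_comm]
      _ ≤ ∑ i : Fin s, (H i).card := Finset.sum_le_sum (fun i _ => hi0 i (Finset.mem_univ i))
      _ = ∑ l : Fin k, (Finset.univ.filter (fun i => l ∈ H i)).card := hdouble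
      _ ≤ ∑ _l : Fin k, β := Finset.sum_le_sum (fun l _ => (hfeas l).trans (hβl l))
      _ = k * β := by simp [mul_comm]
  have hjpos : (0 : ℝ) < (j : ℝ) := by exact_mod_cast hj1
  have hβ0 : (0 : ℝ) ≤ (β : ℝ) := by positivity
  have h1 : (s : ℝ) ≤ (β : ℝ) * (j : ℝ) := by
    have : (s : ℝ) ≤ (j : ℝ) * (β : ℝ) := by exact_mod_cast claim1
    linarith
  have h2 : (s : ℝ) ≤ (β : ℝ) * ((k : ℝ) / (j : ℝ)) := by
    rw [mul_div_assoc', le_div_iff₀ hjpos]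
    have : (s : ℝ) * (j : ℝ) ≤ (k : ℝ) * (β : ℝ) := by exact_mod_cast claim2
    linarith
  have hmem : j ∈ Finset.Icc 1 k := Finset.mem_Icc.2 ⟨hj1, hjk⟩
  have hminφ : min (j : ℝ) ((k : ℝ) / (j : ℝ)) ≤ φ :=
    Finset.le_sup' (fun j : ℕ => min (j : ℝ) ((k : ℝ) / (j : ℝ))) hmem
  have hsmin : (s : ℝ) ≤ (β : ℝ) * min (j : ℝ) ((k : ℝ) / (j : ℝ)) := by
    rcases le_total ((j : ℝ)) ((k : ℝ) / (j : ℝ)) with h | h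
    · rwa [min_eq_left h]
    · rwa [min_eq_right h]
  calc (s : ℝ) ≤ (β : ℝ) * min (j : ℝ) ((k : ℝ) / (j : ℝ)) := hsmin
    _ ≤ (β : ℝ) * φ := mul_le_mul_of_nonneg_left hminφ hβ0
end

section
/- Let π = {A_1, A_2, A_3} be a partition of an m-element set into three nonempty parts with sizes β_1, β_2, β_3. Then the maximum of s(Δ) over families Δ feasible for π equals max{β_1, β_2, β_3, ⌊m/2⌋}. -/
open Finset

lemma fin_card_filter_Ico (n a b : ℕ) (hab : a ≤ b) (hbn : b ≤ n) :
    (Finset.univ.filter (fun i : Fin n => a ≤ i.1 ∧ i.1 < b)).card = b - a := by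
  rw [Finset.card_filter, Fin.sum_univ_eq_sum_range (fun i => if a ≤ i ∧ i < b then 1 else 0),
    ← Finset.card_filter]
  have h : (Finset.range n).filter (fun i => a ≤ i ∧ i < b)
      = Finset.range b \ Finset.range a := by
    ext i; simp only [Finset.mem_filter, Finset.mem_range, Finset.mem_sdiff]; omega
  rw [h, Finset.card_sdiff_of_subset (Finset.range_subset_range.mpr hab), Finset.card_range, Finset.card_range]

lemma fin_card_filter_not_Ico (n a b : ℕ) (hab : a ≤ b) (hbn : b ≤ n) :
    (Finset.univ.filter (fun i : Fin n => ¬(a ≤ i.1 ∧ i.1 < b))).card = n - (b - a) := by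
  have := Finset.card_filter_add_card_filter_not
    (s := (Finset.univ : Finset (Fin n))) (p := fun i : Fin n => a ≤ i.1 ∧ i.1 < b)
  rw [fin_card_filter_Ico n a b hab hbn, Finset.card_univ, Fintype.card_fin] at this
  omega

/-- A family of `β l` copies of the singleton `{l}` is feasible. -/
lemma singleton_family_mem (β : Fin 3 → ℕ) (l : Fin 3) (s : ℕ) (hs : s ≤ β l) :
    ∃ H : Fin s → Finset (Fin 3),
      (∀ i j, (H i ∩ H j).Nonempty) ∧
      (∀ l' : Fin 3, (Finset.univ.filter (fun i => l' ∈ H i)).card ≤ β l') := by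
  refine ⟨fun _ => {l}, fun i j => ⟨l, by simp⟩, ?_⟩
  intro l'
  rcases eq_or_ne l' l with h | h
  · subst h
    calc (Finset.univ.filter (fun i : Fin s => l' ∈ ({l'} : Finset (Fin 3)))).card
        ≤ (Finset.univ : Finset (Fin s)).card := Finset.card_filter_le _ _
      _ = s := by simp
      _ ≤ β l' := hs
  · simp [h]

/-- Proposition 1, case k = 3: for a partition of an m-element set into three
nonempty parts of sizes β 0, β 1, β 2, the maximum size of a feasible family
equals max{β 0, β 1, β 2, ⌊m/2⌋}. -/
theorem max_feasible_family_three_parts (β : Fin 3 → ℕ) (m : ℕ)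
    (hpos : ∀ l, 1 ≤ β l) (hm : β 0 + β 1 + β 2 = m) :
    IsGreatest {s : ℕ | ∃ H : Fin s → Finset (Fin 3),
      (∀ i j, (H i ∩ H j).Nonempty) ∧
      (∀ l : Fin 3, (Finset.univ.filter (fun i => l ∈ H i)).card ≤ β l)}
      (max (max (β 0) (β 1)) (max (β 2) (m / 2))) := by
  set M := max (max (β 0) (β 1)) (max (β 2) (m / 2)) with hMdef
  constructor
  · -- membership: construct a feasible family of size M
    have hcases : M = β 0 ∨ M = β 1 ∨ M = β 2 ∨
        (M = m / 2 ∧ β 0 ≤ m / 2 ∧ β 1 ≤ m / 2 ∧ β 2 ≤ m / 2) := by omega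
    rcases hcases with h | h | h | ⟨h, hb0, hb1, hb2⟩
    · exact h ▸ singleton_family_mem β 0 (β 0) le_rfl
    · exact h ▸ singleton_family_mem β 1 (β 1) le_rfl
    · exact h ▸ singleton_family_mem β 2 (β 2) le_rfl
    · -- construction with two-element sets
      set n := m / 2 with hn
      have h2n : 2 * n ≤ m := by omega
      have hn01 : n ≤ β 0 + β 1 := by omega
      set x := β 0 + β 1 - n with hx
      set y := n - β 0 with hy
      have hxy : x + y = β 1 := by omega
      have hxyn : x + y ≤ n := by omega
      rw [show M = n from h]
      refine ⟨fun i : Fin n =>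
        ({(if i.1 < x then 2 else if i.1 < x + y then 0 else 1 : Fin 3)}ᶜ : Finset (Fin 3)),
        ?_, ?_⟩
      · intro i j
        exact (by decide : ∀ a b : Fin 3, (({a}ᶜ ∩ {b}ᶜ : Finset (Fin 3))).Nonempty) _ _
      · have k0 : (Finset.univ.filter (fun i : Fin n => (0 : Fin 3) ∈
              ({(if i.1 < x then 2 else if i.1 < x + y then 0 else 1 : Fin 3)}ᶜ :
                Finset (Fin 3)))).card ≤ β 0 := by
            have he : (Finset.univ.filter (fun i : Fin n => (0 : Fin 3) ∈
                ({(if i.1 < x then 2 else if i.1 < x + y then 0 else 1 : Fin 3)}ᶜ :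
                  Finset (Fin 3))))
                = Finset.univ.filter (fun i : Fin n => ¬(x ≤ i.1 ∧ i.1 < x + y)) := by
              apply Finset.filter_congr
              intro i _
              simp only [Finset.mem_compl, Finset.mem_singleton]
              split_ifs with h1 h2 <;> simp <;> omega
            rw [he, fin_card_filter_not_Ico n x (x + y) (by omega) hxyn]
            omega
        have k1 : (Finset.univ.filter (fun i : Fin n => (1 : Fin 3) ∈
              ({(if i.1 < x then 2 else if i.1 < x + y then 0 else 1 : Fin 3)}ᶜ :
                Finset (Fin 3)))).card ≤ β 1 := by
            have he : (Finset.univ.filter (fun i : Fin n => (1 : Fin 3) ∈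
                ({(if i.1 < x then 2 else if i.1 < x + y then 0 else 1 : Fin 3)}ᶜ :
                  Finset (Fin 3))))
                = Finset.univ.filter (fun i : Fin n => ¬(x + y ≤ i.1 ∧ i.1 < n)) := by
              apply Finset.filter_congr
              intro i _
              have := i.isLt
              simp only [Finset.mem_compl, Finset.mem_singleton]
              split_ifs with h1 h2 <;> simp <;> omega
            rw [he, fin_card_filter_not_Ico n (x + y) n hxyn le_rfl]
            omega
        have k2 : (Finset.univ.filter (fun i : Fin n => (2 : Fin 3) ∈
              ({(if i.1 < x then 2 else if i.1 < x + y then 0 else 1 : Fin 3)}ᶜ :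
                Finset (Fin 3)))).card ≤ β 2 := by
            have he : (Finset.univ.filter (fun i : Fin n => (2 : Fin 3) ∈
                ({(if i.1 < x then 2 else if i.1 < x + y then 0 else 1 : Fin 3)}ᶜ :
                  Finset (Fin 3))))
                = Finset.univ.filter (fun i : Fin n => ¬(0 ≤ i.1 ∧ i.1 < x)) := by
              apply Finset.filter_congr
              intro i _
              simp only [Finset.mem_compl, Finset.mem_singleton]
              split_ifs with h1 h2 <;> simp <;> omega
            rw [he, fin_card_filter_not_Ico n 0 x (by omega) (by omega)]
            omega
        intro l
        fin_cases l
        · exact k0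
        · exact k1
        · exact k2
  · -- upper bound
    rintro s ⟨H, hint, hcount⟩
    by_cases hcard : ∀ i, 2 ≤ (H i).card
    · -- all sets have ≥ 2 elements, so 2 s ≤ m
      have hsum : ∀ i, (H i).card = ∑ l : Fin 3, if l ∈ H i then 1 else 0 := by
        intro i
        conv_lhs => rw [← Finset.filter_univ_mem (H i)]
        rw [Finset.card_filter]
      have h2s : 2 * s ≤ ∑ i : Fin s, (H i).card := by
        calc 2 * s = ∑ _i : Fin s, 2 := by simp [mul_comm]
          _ ≤ ∑ i : Fin s, (H i).card := Finset.sum_le_sum (fun i _ => hcard i)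
      have hswap : ∑ i : Fin s, (H i).card
          = ∑ l : Fin 3, (Finset.univ.filter (fun i : Fin s => l ∈ H i)).card := by
        simp_rw [hsum, Finset.card_filter]
        rw [Finset.sum_comm]
      have hle : ∑ l : Fin 3, (Finset.univ.filter (fun i : Fin s => l ∈ H i)).card ≤ m := by
        calc ∑ l : Fin 3, (Finset.univ.filter (fun i : Fin s => l ∈ H i)).card
            ≤ ∑ l : Fin 3, β l := Finset.sum_le_sum (fun l _ => hcount l)
          _ = m := by rw [Fin.sum_univ_three]; exact hm
      have : 2 * s ≤ m := by omega
      omega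
    · -- some set is a singleton {l}; then every set contains l
      push_neg at hcard
      obtain ⟨i, hi⟩ := hcard
      have hne : (H i).Nonempty := by
        have := hint i i
        rwa [Finset.inter_self] at this
      have h1 : (H i).card = 1 := by
        have := Finset.card_pos.mpr hne
        omega
      obtain ⟨l, hl⟩ := Finset.card_eq_one.mp h1
      have hall : ∀ j, l ∈ H j := by
        intro j
        obtain ⟨a, ha⟩ := hint i j
        rw [Finset.mem_inter, hl, Finset.mem_singleton] at ha
        rcases ha with ⟨rfl, ha2⟩
        exact ha2
      have : (Finset.univ.filter (fun j : Fin s => l ∈ H j)) = Finset.univ := by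
        apply Finset.filter_true_of_mem
        intro j _
        exact hall j
      have hs : s ≤ β l := by
        have hc := hcount l
        rw [this, Finset.card_univ, Fintype.card_fin] at hc
        exact hc
      have hb0 : β 0 ≤ M := by omega
      have hb1 : β 1 ≤ M := by omega
      have hb2 : β 2 ≤ M := by omega
      have hbM : β l ≤ M := by
        fin_cases l
        · exact hb0
        · exact hb1
        · exact hb2
      omega
end

section
/- Let β_1, β_2, β_3 be nonnegative integers with sum m, each β_l < ⌊m/2⌋. Then there exist nonnegative integers s_{12}, s_{13}, s_{23} with s_{12} + s_{13} ≤ β_1, s_{12} + s_{23} ≤ β_2, s_{13} + s_{23} ≤ β_3, and s_{12} + s_{13} + s_{23} = ⌊m/2⌋. -/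
/-- The construction step in Proposition 1 for k = 3: if β₁ + β₂ + β₃ = m and
each β_l < ⌊m/2⌋, then there are nonnegative integers s₁₂, s₁₃, s₂₃ with
s₁₂ + s₁₃ ≤ β₁, s₁₂ + s₂₃ ≤ β₂, s₁₃ + s₂₃ ≤ β₃ and s₁₂ + s₁₃ + s₂₃ = ⌊m/2⌋. -/
theorem three_parts_construction (β₁ β₂ β₃ m : ℕ)
    (hm : β₁ + β₂ + β₃ = m)
    (h1 : β₁ < m / 2) (h2 : β₂ < m / 2) (h3 : β₃ < m / 2) :
    ∃ s₁₂ s₁₃ s₂₃ : ℕ,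
      s₁₂ + s₁₃ ≤ β₁ ∧ s₁₂ + s₂₃ ≤ β₂ ∧ s₁₃ + s₂₃ ≤ β₃ ∧
      s₁₂ + s₁₃ + s₂₃ = m / 2 := by
  exact ⟨β₁ + β₂ - m / 2, m / 2 - β₂, m / 2 - β₁, by omega, by omega, by omega, by omega⟩
end
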